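/- With Φ(L) := Σ_{x < y} (−1)^{ε(x)+ε(y)} L(x,y) as before, suppose six pairwise distinct indices i^0, i^1, j^0, j^1, p^0, p^1 (components i, j, p at levels 0 and 1) are given, and L' agrees with L except that L'(i^1, j^1) = L(i^1, j^1) + δ, L'(i^0, p^1) = L(i^0, p^1) + δ, and L'(j^0, p^0) = L(j^0, p^0) + δ for some δ ∈ ℝ (symmetrically in each argument pair). Then Φ(L') − Φ(L) = δ. -/

import Mathlib

/-!
`Φ` is linear in `L`, and `L' - L` is `δ` times the sum of the indicators of the three unordered
pairs. The indicator of a pair `{x, y}` meets exactly one ordered pair `x < y` of the sum, so its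
`Φ` is `(-1) ^ (ε x + ε y)`; the three pairs have exponents `2, 1, 0`, giving `(1 - 1 + 1) δ = δ`.
-/

open Finset

/-- Lexicographic order on `I × Bool` with `false < true`. -/
def lexLt {I : Type*} [LinearOrder I] (x y : I × Bool) : Prop :=
  x.1 < y.1 ∨ (x.1 = y.1 ∧ x.2 = false ∧ y.2 = true)

instance {I : Type*} [LinearOrder I] (x y : I × Bool) : Decidable (lexLt x y) := by
  unfold lexLt; infer_instance

/-- `ε(i,b) = if b then 1 else 0`. -/
def eps {I : Type*} (x : I × Bool) : ℕ := if x.2 then 1 else 0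

/-- The signed sum `Φ(L) = Σ_{x < y} (−1)^{ε(x)+ε(y)} L(x,y)`. -/
def Phi {I : Type*} [Fintype I] [LinearOrder I]
    (L : I × Bool → I × Bool → ℝ) : ℝ :=
  ∑ p ∈ (Finset.univ : Finset ((I × Bool) × (I × Bool))).filter
      (fun p => lexLt p.1 p.2),
    (-1 : ℝ) ^ (eps p.1 + eps p.2) * L p.1 p.2

section Lex

variable {I : Type*} [LinearOrder I]

theorem lexLt_iff_toLex_lt {x y : I × Bool} : lexLt x y ↔ toLex x < toLex y := by
  rw [Prod.Lex.toLex_lt_toLex, Bool.lt_iff]; rfl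

theorem lexLt_or_lexLt_of_ne {x y : I × Bool} (h : x ≠ y) : lexLt x y ∨ lexLt y x := by
  simpa only [lexLt_iff_toLex_lt] using lt_or_gt_of_ne (toLex.injective.ne h)

theorem not_lexLt_of_lexLt {x y : I × Bool} (h : lexLt x y) : ¬ lexLt y x := by
  rw [lexLt_iff_toLex_lt] at h ⊢; exact h.not_gt

end Lex

section Phi

variable {I : Type*} [Fintype I] [LinearOrder I]

theorem Phi_add (L M : I × Bool → I × Bool → ℝ) : Phi (L + M) = Phi L + Phi M := by
  simp only [Phi, Pi.add_apply, mul_add, sum_add_distrib]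

theorem Phi_sub (L M : I × Bool → I × Bool → ℝ) : Phi (L - M) = Phi L - Phi M := by
  simp only [Phi, Pi.sub_apply, mul_sub, sum_sub_distrib]

theorem Phi_smul (c : ℝ) (L : I × Bool → I × Bool → ℝ) : Phi (c • L) = c * Phi L := by
  simp only [Phi, Pi.smul_apply, smul_eq_mul, mul_sum, mul_left_comm]

end Phi

theorem Finset.pair_eq_pair_iff {α : Type*} [DecidableEq α] {x y z w : α} :
    ({x, y} : Finset α) = {z, w} ↔ x = z ∧ y = w ∨ x = w ∧ y = z := by
  rw [← coe_inj, coe_pair, coe_pair, Set.pair_eq_pair_iff]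

def pairIndicator {α : Type*} [DecidableEq α] (x y a b : α) : ℝ :=
  if ({a, b} : Finset α) = {x, y} then 1 else 0

theorem pairIndicator_comm {α : Type*} [DecidableEq α] (x y : α) :
    pairIndicator x y = pairIndicator y x := by
  ext a b; simp only [pairIndicator, pair_comm x y]

theorem Phi_pairIndicator_of_lexLt {I : Type*} [Fintype I] [LinearOrder I] {x y : I × Bool}
    (h : lexLt x y) : Phi (pairIndicator x y) = (-1) ^ (eps x + eps y) := by
  rw [Phi, sum_eq_single_of_mem (x, y) (by simpa using h)]
  · simp [pairIndicator]
  · rintro ⟨a, b⟩ hmem hne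
    have hab : lexLt a b := by simpa using hmem
    suffices ({a, b} : Finset _) ≠ {x, y} by simp [pairIndicator, this]
    intro he
    rcases Finset.pair_eq_pair_iff.mp he with ⟨rfl, rfl⟩ | ⟨rfl, rfl⟩
    · exact hne rfl
    · exact not_lexLt_of_lexLt h hab

theorem Phi_pairIndicator {I : Type*} [Fintype I] [LinearOrder I] {x y : I × Bool}
    (h : x ≠ y) : Phi (pairIndicator x y) = (-1) ^ (eps x + eps y) := by
  rcases lexLt_or_lexLt_of_ne h with hxy | hyx
  · exact Phi_pairIndicator_of_lexLt hxy
  · rw [pairIndicator_comm, Phi_pairIndicator_of_lexLt hyx, add_comm]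

theorem sub_eq_of_pair_eq {α : Type*} [DecidableEq α] {L L' : α → α → ℝ}
    (hLsymm : ∀ x y, L x y = L y x) (hL'symm : ∀ x y, L' x y = L' y x) {x y a b : α} {δ : ℝ}
    (h : L' x y = L x y + δ) (hab : ({a, b} : Finset α) = {x, y}) : L' a b - L a b = δ := by
  rcases Finset.pair_eq_pair_iff.mp hab with ⟨rfl, rfl⟩ | ⟨rfl, rfl⟩
  · linarith
  · rw [hLsymm, hL'symm]; linarith

theorem sub_eq_smul_pairIndicator_add {I : Type*} [LinearOrder I]
    (i j p : I) (hij : i ≠ j) (hip : i ≠ p) (hjp : j ≠ p) (δ : ℝ)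
    (L L' : I × Bool → I × Bool → ℝ)
    (hLsymm : ∀ x y, L x y = L y x) (hL'symm : ∀ x y, L' x y = L' y x)
    (h1 : L' (i, true) (j, true) = L (i, true) (j, true) + δ)
    (h2 : L' (i, false) (p, true) = L (i, false) (p, true) + δ)
    (h3 : L' (j, false) (p, false) = L (j, false) (p, false) + δ)
    (hrest : ∀ x y : I × Bool,
      ¬ (({x, y} : Finset (I × Bool)) = {(i, true), (j, true)} ∨
         ({x, y} : Finset (I × Bool)) = {(i, false), (p, true)} ∨
         ({x, y} : Finset (I × Bool)) = {(j, false), (p, false)}) →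
      L' x y = L x y) :
    L' - L = δ • (pairIndicator (i, true) (j, true) + pairIndicator (i, false) (p, true) +
      pairIndicator (j, false) (p, false)) := by
  ext a b
  simp only [Pi.sub_apply, Pi.smul_apply, Pi.add_apply, smul_eq_mul, pairIndicator]
  by_cases h₁ : ({a, b} : Finset _) = {(i, true), (j, true)}
  · simp [h₁, Finset.pair_eq_pair_iff, hij, hip, hjp, sub_eq_of_pair_eq hLsymm hL'symm h1 h₁]
  by_cases h₂ : ({a, b} : Finset _) = {(i, false), (p, true)}
  · simp [h₂, Finset.pair_eq_pair_iff, hij, hip, sub_eq_of_pair_eq hLsymm hL'symm h2 h₂]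
  by_cases h₃ : ({a, b} : Finset _) = {(j, false), (p, false)}
  · simp [h₃, Finset.pair_eq_pair_iff, hjp, sub_eq_of_pair_eq hLsymm hL'symm h3 h₃]
  simp [h₁, h₂, h₃, hrest a b (by tauto)]

theorem stmt5 {I : Type*} [Fintype I] [LinearOrder I]
    (i j p : I) (hij : i ≠ j) (hip : i ≠ p) (hjp : j ≠ p) (δ : ℝ)
    (L L' : I × Bool → I × Bool → ℝ)
    (hLsymm : ∀ x y, L x y = L y x) (hL'symm : ∀ x y, L' x y = L' y x)
    (h1 : L' (i, true) (j, true) = L (i, true) (j, true) + δ)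
    (h2 : L' (i, false) (p, true) = L (i, false) (p, true) + δ)
    (h3 : L' (j, false) (p, false) = L (j, false) (p, false) + δ)
    (hrest : ∀ x y : I × Bool,
      ¬ (({x, y} : Finset (I × Bool)) = {(i, true), (j, true)} ∨
         ({x, y} : Finset (I × Bool)) = {(i, false), (p, true)} ∨
         ({x, y} : Finset (I × Bool)) = {(j, false), (p, false)}) →
      L' x y = L x y) :
    Phi L' - Phi L = δ := by
  rw [← Phi_sub, sub_eq_smul_pairIndicator_add i j p hij hip hjp δ L L' hLsymm hL'symm h1 h2 h3
    hrest, Phi_smul, Phi_add, Phi_add, Phi_pairIndicator (by simpa using hij),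
    Phi_pairIndicator (by simp), Phi_pairIndicator (by simpa using hjp)]
  norm_num [eps]
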